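/- Let θ < λ be regular cardinals and D a θ-covering matrix for λ such that CP(D) holds. Then for every successor ordinal η < θ with θ^{+η} < λ, the set A_D ∩ S^λ_{θ^{+η}} is stationary in λ. -/

import Mathlib

noncomputable section

universe u

open Cardinal Set

/-- The order type of a set of ordinals: the unique ordinal `o` such that `s` is
order-isomorphic to `Set.Iio o` (and `0` if there is no such ordinal). -/
def otp (s : Set Ordinal) : Ordinal :=
  sInf {o : Ordinal | Nonempty (s ≃o Set.Iio o)}

/-- `A` is unbounded in `β`. -/
def IsUnboundedIn (A : Set Ordinal) (β : Ordinal) : Prop :=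
  ∀ γ < β, ∃ δ ∈ A, γ ≤ δ

/-- `γ` is a limit of elements of `C`. -/
def IsAccPt (C : Set Ordinal) (γ : Ordinal) : Prop :=
  ∀ δ < γ, ∃ ε ∈ C, δ < ε ∧ ε < γ

/-- `C` is club in `β`: a subset of `β`, unbounded in `β`, and closed under limits below `β`. -/
def IsClubIn (C : Set Ordinal) (β : Ordinal) : Prop :=
  C ⊆ Set.Iio β ∧ IsUnboundedIn C β ∧ ∀ γ < β, 0 < γ → IsAccPt C γ → γ ∈ C

/-- `S` is stationary in `β`: it meets every club in `β`. -/
def IsStationaryIn (S : Set Ordinal) (β : Ordinal) : Prop :=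
  ∀ C, IsClubIn C β → (S ∩ C).Nonempty

/-- `D` is a `θ`-covering matrix for `lam`. -/
def IsCoveringMatrix (θ lam : Cardinal) (D : Ordinal → Ordinal → Set Ordinal) : Prop :=
  (∀ β < lam.ord, (⋃ i ∈ Set.Iio θ.ord, D i β) = Set.Iio β) ∧
  (∀ β < lam.ord, ∀ i j, i < j → j < θ.ord → D i β ⊆ D j β) ∧
  (∀ β γ, β < γ → γ < lam.ord → ∀ i < θ.ord, ∃ j < θ.ord, D i β ⊆ D j γ)

/-- `D` is transitive. -/
def TransitiveMatrix (θ lam : Cardinal) (D : Ordinal → Ordinal → Set Ordinal) : Prop :=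
  ∀ α β, α < β → β < lam.ord → ∀ i < θ.ord, α ∈ D i β → D i α ⊆ D i β

/-- `D` is uniform: every limit `β < lam` has some `D i β` containing a club in `β`. -/
def UniformMatrix (θ lam : Cardinal) (D : Ordinal → Ordinal → Set Ordinal) : Prop :=
  ∀ β < lam.ord, Order.IsSuccLimit β → ∃ i < θ.ord, ∃ C ⊆ D i β, IsClubIn C β

/-- `D` is normal: the order types of its entries are bounded below `lam`. -/
def NormalMatrix (θ lam : Cardinal) (D : Ordinal → Ordinal → Set Ordinal) : Prop :=
  ∃ b < lam.ord, ∀ i < θ.ord, ∀ γ < lam.ord, otp (D i γ) < b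

/-- `β_D`: the least ordinal strictly above the order types of all entries of `D`. -/
def matrixBound (θ lam : Cardinal) (D : Ordinal → Ordinal → Set Ordinal) : Ordinal :=
  sInf {b | ∀ i < θ.ord, ∀ γ < lam.ord, otp (D i γ) < b}

/-- `D` is downward coherent. -/
def DownwardCoherent (θ lam : Cardinal) (D : Ordinal → Ordinal → Set Ordinal) : Prop :=
  ∀ α β, α < β → β < lam.ord → ∀ i < θ.ord, ∃ j < θ.ord, D i β ∩ Set.Iio α ⊆ D j α

/-- `D` is locally downward coherent. -/
def LocallyDownwardCoherent (θ lam : Cardinal.{u})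
    (D : Ordinal.{u} → Ordinal.{u} → Set Ordinal.{u}) : Prop :=
  ∀ X : Set Ordinal.{u}, X ⊆ Set.Iio lam.ord → #X ≤ Cardinal.lift.{u + 1} θ →
    ∃ γX < lam.ord, ∀ β < lam.ord, ∀ i < θ.ord, ∃ j < θ.ord,
      X ∩ D i β ⊆ X ∩ D j γX

/-- `D` is strongly locally downward coherent. -/
def StronglyLocallyDownwardCoherent (θ lam : Cardinal.{u})
    (D : Ordinal.{u} → Ordinal.{u} → Set Ordinal.{u}) : Prop :=
  ∀ X : Set Ordinal.{u}, X ⊆ Set.Iio lam.ord → #X ≤ Cardinal.lift.{u + 1} θ →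
    ∃ γX < lam.ord, ∀ β, γX ≤ β → β < lam.ord →
      ∃ i < θ.ord, ∀ j, i ≤ j → j < θ.ord → X ∩ D j β = X ∩ D j γX

/-- `D` covers `[T]^κ`. -/
def Covers (θ lam : Cardinal.{u}) (D : Ordinal.{u} → Ordinal.{u} → Set Ordinal.{u})
    (T : Set Ordinal.{u}) (κ : Cardinal.{u}) : Prop :=
  ∀ X ⊆ T, #X = Cardinal.lift.{u + 1} κ → ∃ i < θ.ord, ∃ β < lam.ord, X ⊆ D i β

/-- The covering property `CP(D)`. -/
def CP (θ lam : Cardinal) (D : Ordinal → Ordinal → Set Ordinal) : Prop :=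
  ∃ T ⊆ Set.Iio lam.ord, IsUnboundedIn T lam.ord ∧ Covers θ lam D T θ

/-- `CP(lam, θ)`: `CP(D)` holds for every locally downward coherent `θ`-covering matrix `D`. -/
def CPAll (θ lam : Cardinal) : Prop :=
  ∀ D, IsCoveringMatrix θ lam D → LocallyDownwardCoherent θ lam D → CP θ lam D

/-- `A_D`: the set of good points for `D`. -/
def goodPoints (θ lam : Cardinal) (D : Ordinal → Ordinal → Set Ordinal) : Set Ordinal :=
  {β | β < lam.ord ∧ θ < Ordinal.cof β ∧
    ∃ A ⊆ Set.Iio β, IsUnboundedIn A β ∧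
      ∀ γ < β, ∃ α < β, ∃ i < θ.ord, A ∩ Set.Iio γ ⊆ D i α}

/-- `θ^{+η}`: the `η`-th iterated cardinal successor of `θ`. -/
def iterSucc (θ : Cardinal) (η : Ordinal) : Cardinal :=
  Ordinal.limitRecOn η θ (fun _ ih => Order.succ ih)
    (fun o _ ih => ⨆ i : Set.Iio o, ih i.1 i.2)

/-- `f <* g` mod bounded subsets of `θ`. -/
def ltStar (θ : Cardinal) (f g : Ordinal → Ordinal) : Prop :=
  ∃ i < θ.ord, ∀ j, i ≤ j → j < θ.ord → f j < g j

/-- `⟨f β : β < δ⟩` is a club-increasing sequence of functions from `θ` to the ordinals. -/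
def ClubIncreasing (θ : Cardinal) (δ : Ordinal) (f : Ordinal → Ordinal → Ordinal) : Prop :=
  (∀ β < δ, ∀ i j, i ≤ j → j < θ.ord → f β i ≤ f β j) ∧
  (∀ α β, α < β → β < δ → ltStar θ (f α) (f β)) ∧
  (∀ β < δ, θ < Ordinal.cof β → ∃ C, IsClubIn C β ∧ ∃ i < θ.ord,
    ∀ α ∈ C, ∀ j, i ≤ j → j < θ.ord → f α j < f β j)

/-- `γ_f`: the least ordinal strictly above all values of the sequence. -/
def seqBound (θ : Cardinal) (δ : Ordinal) (f : Ordinal → Ordinal → Ordinal) : Ordinal :=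
  sInf {γ | ∀ β < δ, ∀ i < θ.ord, f β i < γ}

/-- `g` is an exact upper bound for `⟨f β : β < δ⟩` with respect to `<*` on `θ`. -/
def IsEub (θ : Cardinal) (δ : Ordinal) (f : Ordinal → Ordinal → Ordinal)
    (g : Ordinal → Ordinal) : Prop :=
  (∀ β < δ, ltStar θ (f β) g) ∧
  ∀ h : Ordinal → Ordinal, ltStar θ h g → ∃ β < δ, ltStar θ h (f β)

/-- The simultaneous stationary reflection principle `R(lam, θ)`. -/
def RPrinciple (lam θ : Cardinal) : Prop :=
  ∃ S ⊆ Set.Iio lam.ord, IsStationaryIn S lam.ord ∧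
    ∀ T : Ordinal → Set Ordinal,
      (∀ j < θ.ord, T j ⊆ S ∧ IsStationaryIn (T j) lam.ord) →
      ∃ α < lam.ord, ℵ₀ < Ordinal.cof α ∧
        ∀ j < θ.ord, IsStationaryIn (T j ∩ Set.Iio α) α

/-- A `□_κ`-sequence. -/
def IsSquareSeq (κ : Cardinal) (C : Ordinal → Set Ordinal) : Prop :=
  ∀ β < (Order.succ κ).ord, Order.IsSuccLimit β →
    IsClubIn (C β) β ∧ otp (C β) ≤ κ.ord ∧
    ∀ α ∈ C β, 0 < α → IsAccPt (C β) α → C β ∩ Set.Iio α = C α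

/-- The square principle `□_κ`. -/
def SquarePrinciple (κ : Cardinal) : Prop := ∃ C, IsSquareSeq κ C

/-- `f <* g` mod finite on `B ⊆ ω`. -/
def ltStarB (B : Set ℕ) (f g : ℕ → Ordinal) : Prop :=
  ∃ m, ∀ n ∈ B, m ≤ n → f n < g n

/-- `g` is an exact upper bound for `⟨f α : α < δ⟩` with respect to `<*` mod finite on `B`. -/
def IsEubB (B : Set ℕ) (δ : Ordinal) (f : Ordinal → ℕ → Ordinal) (g : ℕ → Ordinal) : Prop :=
  (∀ α < δ, ltStarB B (f α) g) ∧
  ∀ h : ℕ → Ordinal, ltStarB B h g → ∃ α < δ, ltStarB B h (f α)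

/-- A scale of length `ℵ_{ω+1}` in `∏_{n ∈ B} ℵ_n`. -/
def IsScale (B : Set ℕ) (f : Ordinal → ℕ → Ordinal) : Prop :=
  (∀ α < (Cardinal.aleph (Ordinal.omega0 + 1)).ord, ∀ n ∈ B, f α n < (Cardinal.aleph n).ord) ∧
  (∀ α β, α < β → β < (Cardinal.aleph (Ordinal.omega0 + 1)).ord → ltStarB B (f α) (f β)) ∧
  (∀ g : ℕ → Ordinal, (∀ n ∈ B, g n < (Cardinal.aleph n).ord) →
    ∃ α < (Cardinal.aleph (Ordinal.omega0 + 1)).ord, ltStarB B g (f α))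

/-!
From `CP(D)`, witnessed by an unbounded `T`, every subset of `T` of size at most `θ^{+ρ}`,
`ρ < θ`, lies in a single entry of `D`. This goes by induction on `ρ`: after moving the pieces
to a common column, an increasing union of regular length `θ^{+σ+1} > θ` is covered because
some row index recurs cofinally often, and a union of fewer than `θ` pieces because the row
indices are bounded below `θ`.

Given a club `C`, a recursion of length `κ = θ^{+η}` produces `b ξ ∈ C` and `a ξ ∈ T` with
`b ξ ≤ a ξ`, each `b ξ` lying above all earlier `a ζ` and above a column covering
`{a ζ' | ζ' ≤ ζ}`. As `η` is a successor, `κ` is regular, so `β = sup b ξ` lies in `C`, has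
cofinality `κ`, and `{a ξ | ξ < κ}` witnesses that `β` is a good point.
-/

open Ordinal Order

theorem Cardinal.IsRegular.iSup_Iio_add_one_lt_ord {c : Cardinal.{u}} (hc : c.IsRegular)
    {o : Ordinal.{u}} (ho : o < c.ord) {f : Iio o → Ordinal.{u}} (hf : ∀ i, f i < c.ord) :
    ⨆ i, f i + 1 < c.ord := by
  refine Ordinal.lift_iSup_add_one_lt_of_lt_cof ?_ hf
  rwa [← lift_cof, hc.cof_ord, Cardinal.mk_Iio_ordinal, lift_lift, lift_lt, ← lt_ord]

theorem Cardinal.IsRegular.iSup_Iio_lt_ord {c : Cardinal.{u}} (hc : c.IsRegular)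
    {o : Ordinal.{u}} (ho : o < c.ord) {f : Iio o → Ordinal.{u}} (hf : ∀ i, f i < c.ord) :
    ⨆ i, f i < c.ord :=
  (Ordinal.iSup_le_iSup_add_one f).trans_lt (hc.iSup_Iio_add_one_lt_ord ho hf)

theorem lift_le_mk_of_isUnboundedIn {lam : Cardinal.{u}} (hlam : lam.IsRegular)
    {T : Set Ordinal.{u}} (hT : T ⊆ Iio lam.ord) (hTu : IsUnboundedIn T lam.ord) :
    Cardinal.lift.{u + 1} lam ≤ #T := by
  have hcof : IsCofinal (Subtype.val ⁻¹' T : Set (Iio lam.ord)) := fun x ↦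
    let ⟨δ, hδT, hxδ⟩ := hTu x.1 x.2
    ⟨⟨δ, hT hδT⟩, hδT, hxδ⟩
  calc Cardinal.lift.{u + 1} lam = Order.cof (Iio lam.ord) := by
        rw [cof_Iio, ← lift_cof, hlam.cof_ord]
    _ ≤ #(Subtype.val ⁻¹' T : Set (Iio lam.ord)) := Order.cof_le hcof
    _ = #T := mk_preimage_of_injective_of_subset_range _ _ Subtype.val_injective
        (by simpa [Set.subset_def] using hT)

theorem exists_rank_of_mk_le {X : Set Ordinal.{u}} {c : Cardinal.{u}}
    (hX : #X ≤ Cardinal.lift.{u + 1} c) :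
    ∃ r : Ordinal.{u} → Ordinal.{u}, (∀ x ∈ X, r x < c.ord) ∧
      ∀ ζ, #(X ∩ r ⁻¹' Iio ζ : Set Ordinal) ≤ Cardinal.lift.{u + 1} ζ.card := by
  classical
  rw [← card_ord c, ← Cardinal.mk_Iio_ordinal, le_def] at hX
  obtain ⟨g⟩ := hX
  refine ⟨fun x ↦ if hx : x ∈ X then g ⟨x, hx⟩ else 0,
    fun x hx ↦ by simpa [hx] using (g ⟨x, hx⟩).2.out, fun ζ ↦ ?_⟩
  rw [← Cardinal.mk_Iio_ordinal]
  refine mk_le_of_injective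
    (f := fun x ↦ ⟨(g ⟨x, x.2.1⟩ : Ordinal), by simpa [x.2.1] using x.2.2⟩) fun x y hxy ↦ ?_
  have hxy' : g ⟨x, x.2.1⟩ = g ⟨y, y.2.1⟩ := Subtype.ext (by simpa using hxy)
  exact Subtype.ext (Subtype.mk.inj (g.injective hxy'))

theorem iterSucc_zero (θ : Cardinal.{u}) : iterSucc θ 0 = θ :=
  limitRecOn_zero _ _ _

theorem iterSucc_add_one (θ : Cardinal.{u}) (ρ : Ordinal.{u}) :
    iterSucc θ (ρ + 1) = succ (iterSucc θ ρ) :=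
  limitRecOn_add_one _ _ _ _

theorem iterSucc_of_isSuccLimit (θ : Cardinal.{u}) {ρ : Ordinal.{u}} (hρ : IsSuccLimit ρ) :
    iterSucc θ ρ = ⨆ σ : Iio ρ, iterSucc θ σ :=
  limitRecOn_limit _ _ _ _ hρ

theorem le_iterSucc (θ : Cardinal.{u}) (ρ : Ordinal.{u}) : θ ≤ iterSucc θ ρ := by
  induction ρ using Ordinal.limitRecOn with
  | zero => rw [iterSucc_zero]
  | add_one ρ ih => exact ih.trans ((le_succ _).trans_eq (iterSucc_add_one θ ρ).symm)
  | limit ρ hρ ih =>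
    rw [iterSucc_of_isSuccLimit θ hρ]
    exact (ih 0 hρ.bot_lt).trans
      (le_ciSup (f := fun σ : Iio ρ ↦ iterSucc θ σ) Cardinal.bddAbove_of_small
        ⟨0, hρ.bot_lt⟩)

def IsCovered (θ lam : Cardinal) (D : Ordinal → Ordinal → Set Ordinal) (X : Set Ordinal) :
    Prop :=
  ∃ i < θ.ord, ∃ δ < lam.ord, X ⊆ D i δ

section Covering

variable {θ lam : Cardinal.{u}} {D : Ordinal.{u} → Ordinal.{u} → Set Ordinal.{u}}

theorem IsCovered.mono {X Y : Set Ordinal.{u}} (hY : IsCovered θ lam D Y) (hXY : X ⊆ Y) :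
    IsCovered θ lam D X :=
  let ⟨i, hi, δ, hδ, hYD⟩ := hY
  ⟨i, hi, δ, hδ, hXY.trans hYD⟩

theorem IsCoveringMatrix.mono_left (hD : IsCoveringMatrix θ lam D) {i j β : Ordinal.{u}}
    (hβ : β < lam.ord) (hij : i ≤ j) (hj : j < θ.ord) : D i β ⊆ D j β := by
  rcases hij.lt_or_eq with hij | rfl
  · exact hD.2.1 β hβ i j hij hj
  · exact subset_rfl

theorem IsCoveringMatrix.exists_common_column (hD : IsCoveringMatrix θ lam D)
    (hlam : lam.IsRegular) {o : Ordinal.{u}} (ho : o < lam.ord)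
    {X : Ordinal.{u} → Set Ordinal.{u}} (hX : ∀ ζ < o, IsCovered θ lam D (X ζ)) :
    ∃ δ < lam.ord, ∀ ζ < o, ∃ j < θ.ord, X ζ ⊆ D j δ := by
  choose i hi δ hδ hXD using hX
  have hsup : ⨆ ζ : Iio o, δ ζ ζ.2 + 1 < lam.ord :=
    hlam.iSup_Iio_add_one_lt_ord ho fun ζ ↦ hδ ζ ζ.2
  refine ⟨_, hsup, fun ζ hζ ↦ ?_⟩
  obtain ⟨j, hj, hDj⟩ := hD.2.2 _ _
    (Ordinal.lt_iSup_add_one (fun ζ : Iio o ↦ δ ζ ζ.2) ⟨ζ, hζ⟩) hsup _ (hi ζ hζ)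
  exact ⟨j, hj, (hXD ζ hζ).trans hDj⟩

theorem IsCoveringMatrix.isCovered_biUnion_of_lt_ord (hD : IsCoveringMatrix θ lam D)
    (hθ : θ.IsRegular) (hlam : lam.IsRegular) (hθlam : θ < lam) {o : Ordinal.{u}}
    (ho : o < θ.ord) {X : Ordinal.{u} → Set Ordinal.{u}}
    (hX : ∀ ζ < o, IsCovered θ lam D (X ζ)) : IsCovered θ lam D (⋃ ζ < o, X ζ) := by
  obtain ⟨δ, hδ, hXD⟩ :=
    hD.exists_common_column hlam (ho.trans (ord_lt_ord.mpr hθlam)) hX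
  choose j hj hXj using hXD
  have hsup : ⨆ ζ : Iio o, j ζ ζ.2 + 1 < θ.ord :=
    hθ.iSup_Iio_add_one_lt_ord ho fun ζ ↦ hj ζ ζ.2
  refine ⟨_, hsup, δ, hδ, iUnion₂_subset fun ζ hζ ↦ (hXj ζ hζ).trans ?_⟩
  exact hD.mono_left hδ
    (Ordinal.lt_iSup_add_one (fun ζ : Iio o ↦ j ζ ζ.2) ⟨ζ, hζ⟩).le hsup

theorem IsCoveringMatrix.isCovered_biUnion_of_monotone (hD : IsCoveringMatrix θ lam D)
    (hlam : lam.IsRegular) {μ : Cardinal.{u}} (hμ : μ.IsRegular) (hθμ : θ < μ)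
    (hμlam : μ < lam) {X : Ordinal.{u} → Set Ordinal.{u}} (hmono : ∀ ζ ζ', ζ ≤ ζ' → X ζ ⊆ X ζ')
    (hX : ∀ ζ < μ.ord, IsCovered θ lam D (X ζ)) :
    IsCovered θ lam D (⋃ ζ < μ.ord, X ζ) := by
  obtain ⟨δ, hδ, hXD⟩ := hD.exists_common_column hlam (ord_lt_ord.mpr hμlam) hX
  choose j hj hXj using hXD
  -- pigeonhole: `μ` is regular and bigger than `θ`, so some `j` recurs cofinally often
  obtain ⟨k, hk, hcof⟩ :
      ∃ k < θ.ord, ∀ b < μ.ord, ∃ ζ, ∃ hζ : ζ < μ.ord, b ≤ ζ ∧ j ζ hζ = k := by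
    by_contra! hbound
    choose b hb hbj using hbound
    have hsup : ⨆ k : Iio θ.ord, b k k.2 < μ.ord :=
      hμ.iSup_Iio_lt_ord (ord_lt_ord.mpr hθμ) fun k ↦ hb k k.2
    exact hbj _ (hj _ hsup) _ hsup
      (Ordinal.le_iSup (fun k : Iio θ.ord ↦ b k k.2) ⟨_, hj _ hsup⟩) rfl
  refine ⟨k, hk, δ, hδ, iUnion₂_subset fun ζ hζ ↦ ?_⟩
  obtain ⟨ζ', hζ', hζζ', rfl⟩ := hcof ζ hζ
  exact (hmono _ _ hζζ').trans (hXj ζ' hζ')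

variable {T : Set Ordinal.{u}}

theorem Covers.isCovered_of_mk_le (hcov : Covers θ lam D T θ) (hθ : ℵ₀ ≤ θ)
    (hlam : lam.IsRegular) (hθlam : θ ≤ lam) (hT : T ⊆ Iio lam.ord)
    (hTu : IsUnboundedIn T lam.ord) {X : Set Ordinal.{u}} (hXT : X ⊆ T)
    (hX : #X ≤ Cardinal.lift.{u + 1} θ) : IsCovered θ lam D X := by
  -- pad `X` to a subset of `T` of size exactly `θ`
  obtain ⟨S, hST, hS⟩ := le_mk_iff_exists_subset.mp
    ((lift_le.mpr hθlam).trans (lift_le_mk_of_isUnboundedIn hlam hT hTu))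
  refine IsCovered.mono (hcov (X ∪ S) (union_subset hXT hST) ?_) subset_union_left
  refine le_antisymm ?_ (hS ▸ mk_le_mk_of_subset subset_union_right)
  calc #(X ∪ S : Set Ordinal) ≤ #X + #S := mk_union_le _ _
    _ ≤ Cardinal.lift.{u + 1} θ + Cardinal.lift.{u + 1} θ := add_le_add hX hS.le
    _ = Cardinal.lift.{u + 1} θ := add_eq_self (aleph0_le_lift.mpr hθ)

theorem IsCoveringMatrix.isCovered_of_mk_le_iterSucc (hD : IsCoveringMatrix θ lam D)
    (hθ : θ.IsRegular) (hlam : lam.IsRegular) (hT : T ⊆ Iio lam.ord)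
    (hTu : IsUnboundedIn T lam.ord) (hcov : Covers θ lam D T θ) {ρ : Ordinal.{u}}
    (hρ : ρ < θ.ord) (hρlam : iterSucc θ ρ < lam) {X : Set Ordinal.{u}} (hXT : X ⊆ T)
    (hX : #X ≤ Cardinal.lift.{u + 1} (iterSucc θ ρ)) : IsCovered θ lam D X := by
  have hθlam : θ < lam := (le_iterSucc θ ρ).trans_lt hρlam
  induction ρ using Ordinal.limitRecOn generalizing X with
  | zero =>
    rw [iterSucc_zero] at hX
    exact hcov.isCovered_of_mk_le hθ.aleph0_le hlam hθlam.le hT hTu hXT hX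
  | add_one σ ih =>
    -- `X` is an increasing union, of regular length `θ^{+σ+1}`, of pieces of size `θ^{+σ}`
    rw [iterSucc_add_one] at hρlam hX
    have hσ : σ < θ.ord := (lt_add_one σ).trans hρ
    have hμ : (succ (iterSucc θ σ)).IsRegular :=
      isRegular_succ (hθ.aleph0_le.trans (le_iterSucc θ σ))
    obtain ⟨r, hrX, hr⟩ := exists_rank_of_mk_le hX
    refine IsCovered.mono (X := X) (hD.isCovered_biUnion_of_monotone hlam hμ
      ((le_iterSucc θ σ).trans_lt (lt_succ _)) hρlam
      (X := fun ζ ↦ X ∩ r ⁻¹' Iio ζ) (fun ζ ζ' h ↦ inter_subset_inter_right _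
        (preimage_mono (Iio_subset_Iio h))) fun ζ hζ ↦ ?_) fun x hx ↦ ?_
    · refine ih hσ ((lt_succ _).trans hρlam) (inter_subset_left.trans hXT)
        ((hr ζ).trans (lift_le.mpr ?_))
      exact le_of_lt_succ (lt_ord.mp hζ)
    · exact mem_iUnion₂.mpr ⟨r x + 1, (isSuccLimit_ord hμ.aleph0_le).add_one_lt (hrX x hx),
        hx, lt_add_one (r x)⟩
  | limit ρ hlim ih =>
    -- `X` is a union of fewer than `θ` pieces of sizes `θ^{+σ}`, `σ < ρ`
    obtain ⟨r, hrX, hr⟩ := exists_rank_of_mk_le hX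
    have hle : ∀ σ < ρ, iterSucc θ σ ≤ iterSucc θ ρ := fun σ hσ ↦ by
      rw [iterSucc_of_isSuccLimit θ hlim]
      exact le_ciSup (f := fun σ : Iio ρ ↦ iterSucc θ σ) Cardinal.bddAbove_of_small
        ⟨σ, hσ⟩
    refine IsCovered.mono (X := X) (hD.isCovered_biUnion_of_lt_ord hθ hlam hθlam hρ
      (X := fun σ ↦ X ∩ r ⁻¹' Iio (iterSucc θ σ).ord) fun σ hσ ↦ ?_) fun x hx ↦ ?_
    · refine ih σ hσ (hσ.trans hρ) ((hle σ hσ).trans_lt hρlam) (inter_subset_left.trans hXT)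
        ((hr _).trans_eq ?_)
      rw [card_ord]
    · have hrx : (r x).card < ⨆ σ : Iio ρ, iterSucc θ σ := by
        rw [← iterSucc_of_isSuccLimit θ hlim]
        exact lt_ord.mp (hrX x hx)
      obtain ⟨σ, hσ⟩ := (lt_ciSup_iff' Cardinal.bddAbove_of_small).mp hrx
      exact mem_iUnion₂.mpr ⟨σ, σ.2, hx, lt_ord.mpr hσ⟩

end Covering

theorem Ordinal.exists_transfinite_recursion {α : Type*} [Inhabited α]
    (F : (Ordinal.{u} → α) → Ordinal.{u} → α)
    (hF : ∀ f g ξ, (∀ ζ < ξ, f ζ = g ζ) → F f ξ = F g ξ) :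
    ∃ a : Ordinal.{u} → α, ∀ ξ, a ξ = F a ξ := by
  classical
  refine ⟨Ordinal.lt_wf.fix fun ξ ih ↦
    F (fun ζ ↦ if h : ζ < ξ then ih ζ h else default) ξ, fun ξ ↦ ?_⟩
  rw [WellFounded.fix_eq]
  exact hF _ _ ξ fun ζ hζ ↦ by simp [hζ]

/-- Junk value `0` when no element of `S` is `≥ x`. -/
def leastAbove (S : Set Ordinal) (x : Ordinal) : Ordinal :=
  sInf {y ∈ S | x ≤ y}

theorem leastAbove_spec {S : Set Ordinal} {x : Ordinal} (h : ∃ y ∈ S, x ≤ y) :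
    leastAbove S x ∈ S ∧ x ≤ leastAbove S x :=
  csInf_mem (s := {y ∈ S | x ≤ y}) h

/-- Junk value `0` when `X` lies in no `D i δ` with `i < θ`. -/
def coverColumn (θ : Cardinal) (D : Ordinal → Ordinal → Set Ordinal) (X : Set Ordinal) :
    Ordinal :=
  sInf {δ | ∃ i < θ.ord, X ⊆ D i δ}

theorem IsCovered.coverColumn_spec {θ lam : Cardinal} {D : Ordinal → Ordinal → Set Ordinal}
    {X : Set Ordinal} (hX : IsCovered θ lam D X) :
    coverColumn θ D X < lam.ord ∧ ∃ i < θ.ord, X ⊆ D i (coverColumn θ D X) := by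
  obtain ⟨i, hi, δ, hδ, hXD⟩ := hX
  have hδX : δ ∈ {δ | ∃ i < θ.ord, X ⊆ D i δ} := ⟨i, hi, hXD⟩
  exact ⟨(csInf_le' hδX).trans_lt hδ, csInf_mem ⟨δ, hδX⟩⟩

section Reflection

variable {θ lam κ : Cardinal.{u}} {D : Ordinal.{u} → Ordinal.{u} → Set Ordinal.{u}}
  {T C : Set Ordinal.{u}}

theorem exists_interleaved_seq (hlam : lam.IsRegular) (hκlam : κ < lam)
    (hC : IsClubIn C lam.ord) (hT : T ⊆ Iio lam.ord) (hTu : IsUnboundedIn T lam.ord)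
    (hcovT : ∀ X ⊆ T, #X ≤ Cardinal.lift.{u + 1} κ → IsCovered θ lam D X) :
    ∃ a b : Ordinal.{u} → Ordinal.{u}, ∀ ξ < κ.ord, b ξ ∈ C ∧ b ξ ≤ a ξ ∧
      ∀ ζ < ξ, a ζ < b ξ ∧ ∃ δ < b ξ, ∃ i < θ.ord, a '' Iic ζ ⊆ D i δ := by
  -- `b ξ ∈ C` and then `a ξ ∈ T` are chosen above all `a ζ`, `ζ < ξ`, and above a column
  -- covering each initial segment `{a ζ' | ζ' ≤ ζ}`
  let bound (a : Ordinal.{u} → Ordinal.{u}) (ξ : Ordinal.{u}) : Ordinal.{u} :=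
    ⨆ ζ : Iio ξ, max (a ζ) (coverColumn θ D (a '' Iic ζ)) + 1
  obtain ⟨a, ha⟩ := Ordinal.exists_transfinite_recursion
    (fun a ξ ↦ leastAbove T (leastAbove C (bound a ξ))) fun f g ξ hfg ↦ by
      have hbound : bound f ξ = bound g ξ := by
        refine iSup_congr fun ζ ↦ ?_
        have himg : f '' Iic ζ.1 = g '' Iic ζ.1 :=
          image_congr fun ζ' hζ' ↦ hfg ζ' (lt_of_le_of_lt hζ' ζ.2)
        rw [hfg ζ ζ.2, himg]
      simp only [hbound]
  have hcol : ∀ ζ < κ.ord, (∀ ζ' ≤ ζ, a ζ' ∈ T) → IsCovered θ lam D (a '' Iic ζ) :=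
    fun ζ hζ haT ↦ hcovT _ (image_subset_iff.mpr haT) <| mk_image_le.trans <| by
      rw [← Order.Iio_succ, Cardinal.mk_Iio_ordinal, Cardinal.lift_le]
      exact card_le_of_le_ord (succ_le_of_lt hζ)
  have hinv : ∀ ξ < κ.ord, a ξ ∈ T ∧ leastAbove C (bound a ξ) ∈ C ∧
      bound a ξ ≤ leastAbove C (bound a ξ) ∧ leastAbove C (bound a ξ) ≤ a ξ := by
    intro ξ
    induction ξ using WellFoundedLT.induction with
    | ind ξ ih =>
      intro hξ
      have hbound : bound a ξ < lam.ord := hlam.iSup_Iio_add_one_lt_ord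
        (hξ.trans (ord_lt_ord.mpr hκlam)) fun ζ ↦ max_lt (hT (ih ζ ζ.2 (ζ.2.trans hξ)).1)
          (hcol ζ (ζ.2.trans hξ) fun ζ' hζ' ↦
            (ih ζ' (hζ'.trans_lt ζ.2) ((hζ'.trans_lt ζ.2).trans hξ)).1).coverColumn_spec.1
      obtain ⟨hbC, hbb⟩ := leastAbove_spec (hC.2.1 _ hbound)
      obtain ⟨haT, hab⟩ := leastAbove_spec (hTu _ (hC.1 hbC))
      rw [ha ξ]
      exact ⟨haT, hbC, hbb, hab⟩
  refine ⟨a, fun ξ ↦ leastAbove C (bound a ξ), fun ξ hξ ↦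
    ⟨(hinv ξ hξ).2.1, (hinv ξ hξ).2.2.2, fun ζ hζ ↦ ?_⟩⟩
  have hζb : max (a ζ) (coverColumn θ D (a '' Iic ζ)) < leastAbove C (bound a ξ) :=
    (Ordinal.lt_iSup_add_one (fun ζ : Iio ξ ↦ max (a ζ) (coverColumn θ D (a '' Iic ζ)))
      ⟨ζ, hζ⟩).trans_le (hinv ξ hξ).2.2.1
  obtain ⟨i, hi, hiD⟩ := (hcol ζ (hζ.trans hξ) fun ζ' hζ' ↦
    (hinv ζ' ((hζ'.trans_lt hζ).trans hξ)).1).coverColumn_spec.2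
  exact ⟨(le_max_left _ _).trans_lt hζb, _, (le_max_right _ _).trans_lt hζb, i, hi, hiD⟩

theorem exists_mem_goodPoints_of_interleaved_seq (hθκ : θ < κ) (hκ : κ.IsRegular)
    (hκlam : κ < lam) (hlam : lam.IsRegular) (hC : IsClubIn C lam.ord)
    {a b : Ordinal.{u} → Ordinal.{u}} (hab : ∀ ξ < κ.ord, b ξ ∈ C ∧ b ξ ≤ a ξ ∧
      ∀ ζ < ξ, a ζ < b ξ ∧ ∃ δ < b ξ, ∃ i < θ.ord, a '' Iic ζ ⊆ D i δ) :
    ∃ β ∈ C, β ∈ goodPoints θ lam D ∧ β.cof = κ := by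
  have hκlim : IsSuccLimit κ.ord := isSuccLimit_ord hκ.aleph0_le
  have hb : StrictMono fun ξ : Iio κ.ord ↦ b ξ := fun ζ ξ h ↦
    (hab ζ ζ.2).2.1.trans_lt ((hab ξ ξ.2).2.2 ζ h).1
  set β := ⨆ ξ : Iio κ.ord, b ξ
  have hbβ : ∀ ξ < κ.ord, b ξ < β := fun ξ hξ ↦
    (hb (show (⟨ξ, hξ⟩ : Iio κ.ord) < ⟨ξ + 1, hκlim.add_one_lt hξ⟩ from lt_add_one ξ)).trans_le
      (Ordinal.le_iSup (fun ξ : Iio κ.ord ↦ b ξ) _)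
  have hlt : ∀ γ < β, ∃ ξ < κ.ord, γ < b ξ := fun γ hγ ↦
    let ⟨ξ, hξ⟩ := Ordinal.lt_iSup_iff.mp hγ
    ⟨ξ, ξ.2, hξ⟩
  have hβlam : β < lam.ord :=
    hlam.iSup_Iio_lt_ord (ord_lt_ord.mpr hκlam) fun ξ ↦ hC.1 (hab ξ ξ.2).1
  have hcof : β.cof = κ := by rw [cof_iSup_Iio hb hκlim.isSuccPrelimit, hκ.cof_ord]
  have hβC : β ∈ C := hC.2.2 β hβlam (zero_le.trans_lt (hbβ 0 hκlim.bot_lt)) fun γ hγ ↦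
    let ⟨ξ, hξ, hγξ⟩ := hlt γ hγ
    ⟨b ξ, (hab ξ hξ).1, hγξ, hbβ ξ hξ⟩
  refine ⟨β, hβC, ⟨hβlam, hcof ▸ hθκ, a '' Iio κ.ord, ?_, fun γ hγ ↦ ?_, fun γ hγ ↦ ?_⟩,
    hcof⟩
  · rintro _ ⟨ξ, hξ, rfl⟩
    exact ((hab _ (hκlim.add_one_lt hξ)).2.2 ξ (lt_add_one ξ)).1.trans
      (hbβ _ (hκlim.add_one_lt hξ))
  · obtain ⟨ξ, hξ, hγξ⟩ := hlt γ hγ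
    exact ⟨a ξ, ⟨ξ, hξ, rfl⟩, hγξ.le.trans (hab ξ hξ).2.1⟩
  · -- `a ζ < γ < b ξ` forces `ζ ≤ ξ`
    obtain ⟨ξ, hξ, hγξ⟩ := hlt γ hγ
    obtain ⟨-, δ, hδ, i, hi, hD⟩ := (hab _ (hκlim.add_one_lt hξ)).2.2 ξ (lt_add_one ξ)
    refine ⟨δ, hδ.trans (hbβ _ (hκlim.add_one_lt hξ)), i, hi, ?_⟩
    rintro _ ⟨⟨ζ, hζ, rfl⟩, hζγ⟩
    refine hD ⟨ζ, mem_Iic.mpr (not_lt.mp fun hξζ ↦ ?_), rfl⟩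
    exact (hγξ.trans ((hab ξ hξ).2.1.trans_lt ((hab ζ hζ).2.2 ξ hξζ).1)).not_ge
      ((hab ζ hζ).2.1.trans hζγ.out.le)

end Reflection

theorem stmt14_general (θ lam : Cardinal) (hθ : θ.IsRegular) (hlam : lam.IsRegular)
    (D : Ordinal → Ordinal → Set Ordinal) (hD : IsCoveringMatrix θ lam D)
    (hcp : CP θ lam D) :
    ∀ η < θ.ord, (∃ ξ, η = ξ + 1) → iterSucc θ η < lam →
      IsStationaryIn (goodPoints θ lam D ∩ {β | Ordinal.cof β = iterSucc θ η})
        lam.ord := by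
  rintro η hη ⟨σ, rfl⟩ hκlam C hC
  obtain ⟨T, hT, hTu, hcov⟩ := hcp
  have hθκ : θ < iterSucc θ (σ + 1) := by
    rw [iterSucc_add_one]
    exact (le_iterSucc θ σ).trans_lt (lt_succ _)
  have hκ : (iterSucc θ (σ + 1)).IsRegular := by
    rw [iterSucc_add_one]
    exact isRegular_succ (hθ.aleph0_le.trans (le_iterSucc θ σ))
  obtain ⟨a, b, hab⟩ := exists_interleaved_seq hlam hκlam hC hT hTu fun X hXT hX ↦
    hD.isCovered_of_mk_le_iterSucc hθ hlam hT hTu hcov hη hκlam hXT hX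
  obtain ⟨β, hβC, hβgood, hβcof⟩ :=
    exists_mem_goodPoints_of_interleaved_seq hθκ hκ hκlam hlam hC hab
  exact ⟨β, ⟨hβgood, hβcof⟩, hβC⟩

/-- If `CP(D)` holds for a `θ`-covering matrix `D` for `lam`, then for every
successor ordinal `η < θ` with `θ^{+η} < lam`, the set `A_D ∩ S^lam_{θ^{+η}}` is stationary
in `lam`. -/
theorem stmt14 (θ lam : Cardinal) (hθ : θ.IsRegular) (hlam : lam.IsRegular) (hθlam : θ < lam)
    (D : Ordinal → Ordinal → Set Ordinal) (hD : IsCoveringMatrix θ lam D)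
    (hcp : CP θ lam D) :
    ∀ η < θ.ord, (∃ ξ, η = ξ + 1) → iterSucc θ η < lam →
      IsStationaryIn (goodPoints θ lam D ∩ {β | Ordinal.cof β = iterSucc θ η})
        lam.ord :=
  stmt14_general θ lam hθ hlam D hD hcp
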